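/- Let n₀ ≤ n be natural numbers and let f : ℂ → ℂ be holomorphic on the half-plane {s : Re s > n₀ − 1/2}. Let c = (n₀ + n)/2 and let r be a real number with (n − n₀)/2 < r < (n − n₀)/2 + 1/2, so that the circle |s − c| = r encircles exactly the integers n₀, n₀+1, …, n and is contained in the half-plane {Re s > n₀ − 1/2}. Then Σ_{k=n₀}^{n} C(n,k)(−1)^k f(k) = ((−1)^n n!/(2πi)) · ∮_{|s−c|=r} f(s)/(s(s−1)(s−2)⋯(s−n)) ds, where the circle is traversed counterclockwise (Nörlund–Rice integral representation). -/

import Mathlib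

/-!
Partial fractions give `1 / ∏ (s - j) = ∑_k w_k / (s - k)` with the Lagrange nodal weights
`w_k = ∏_{j ≠ k} (k - j)⁻¹ = (-1)^(n-k) / (k! (n-k)!)`. Integrating term by term, Cauchy's
formula turns each node `k` inside the circle into `2πi w_k f(k)`, while the nodes `k < n₀` lie
outside the closed disc, where `f(s) / (s - k)` is holomorphic, so they contribute nothing.
-/

open Complex Finset Lagrange Metric
open scoped Nat

theorem inv_prod_sub_eq_sum_nodalWeight {F ι : Type*} [Field F] [DecidableEq ι] {s : Finset ι}
    {v : ι → F} {x : F} (hvs : Set.InjOn v s) (hs : s.Nonempty) (hx : ∀ i ∈ s, x ≠ v i) :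
    (∏ i ∈ s, (x - v i))⁻¹ = ∑ i ∈ s, nodalWeight s v i * (x - v i)⁻¹ := by
  have h := eval_interpolate_not_at_node 1 hx
  simp only [interpolate_one hvs hs, Polynomial.eval_one, eval_nodal, Pi.one_apply,
    mul_one] at h
  exact inv_eq_of_mul_eq_one_right h.symm

section CauchyFormula

variable {E : Type*} [NormedAddCommGroup E] [NormedSpace ℂ E] [CompleteSpace E]

open scoped Classical in
theorem circleIntegral_sub_inv_smul_eq_ite {f : ℂ → E} {c w : ℂ} {R : ℝ} (hR : 0 ≤ R)
    (hf : DifferentiableOn ℂ f (closedBall c R)) (hw : w ∉ sphere c R) :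
    (∮ z in C(c, R), (z - w)⁻¹ • f z) =
      if w ∈ ball c R then (2 * Real.pi * I : ℂ) • f w else 0 := by
  split_ifs with hwb
  · exact hf.circleIntegral_sub_inv_smul hwb
  · have hw' : w ∉ closedBall c R := by
      rw [← ball_union_sphere]
      exact fun h => h.elim hwb hw
    have hinv : DifferentiableOn ℂ (fun z => (z - w)⁻¹) (closedBall c R) :=
      (differentiableOn_id.sub_const w).inv fun z hz => sub_ne_zero.2 (ne_of_mem_of_not_mem hz hw')
    exact ((hinv.smul hf).mono closure_ball_subset_closedBall).diffContOnCl.circleIntegral_eq_zero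
      hR

open scoped Classical in
theorem circleIntegral_inv_prod_sub_smul {ι : Type*} [DecidableEq ι] {s : Finset ι} {v : ι → ℂ}
    (hvs : Set.InjOn v s) (hs : s.Nonempty) {f : ℂ → E} {c : ℂ} {R : ℝ} (hR : 0 ≤ R)
    (hf : DifferentiableOn ℂ f (closedBall c R)) (hv : ∀ i ∈ s, v i ∉ sphere c R) :
    (∮ z in C(c, R), (∏ i ∈ s, (z - v i))⁻¹ • f z) =
      (2 * Real.pi * I : ℂ) • ∑ i ∈ s with v i ∈ ball c R, nodalWeight s v i • f (v i) := by
  have hfc : ContinuousOn f (sphere c R) := hf.continuousOn.mono sphere_subset_closedBall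
  have hint : ∀ i ∈ s, CircleIntegrable (fun z => nodalWeight s v i • (z - v i)⁻¹ • f z) c R :=
    fun i hi => ContinuousOn.circleIntegrable hR <| continuousOn_const.smul <|
      ((continuousOn_id.sub continuousOn_const).inv₀ fun z hz =>
        sub_ne_zero.2 (ne_of_mem_of_not_mem hz (hv i hi))).smul hfc
  calc (∮ z in C(c, R), (∏ i ∈ s, (z - v i))⁻¹ • f z)
      = ∮ z in C(c, R), ∑ i ∈ s, nodalWeight s v i • (z - v i)⁻¹ • f z := by
        refine circleIntegral.integral_congr hR fun z hz => ?_
        have hz : ∀ i ∈ s, z ≠ v i := fun i hi h => hv i hi (h ▸ hz)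
        simp only [inv_prod_sub_eq_sum_nodalWeight hvs hs hz, sum_smul, smul_smul]
    _ = ∑ i ∈ s, nodalWeight s v i • ∮ z in C(c, R), (z - v i)⁻¹ • f z := by
        rw [circleIntegral.integral_fun_sum hint]
        simp only [circleIntegral.integral_smul]
    _ = _ := by
        rw [sum_filter, smul_sum]
        refine sum_congr rfl fun i hi => ?_
        rw [circleIntegral_sub_inv_smul_eq_ite hR hf (hv i hi)]
        split_ifs
        · exact smul_comm _ _ _
        · simp only [smul_zero]

end CauchyFormula

theorem prod_erase_range_natCast_sub (R : Type*) [CommRing R] (k m : ℕ) :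
    ∏ j ∈ (range (k + m + 1)).erase k, ((k : R) - j) = (-1) ^ m * k ! * m ! := by
  induction m with
  | zero =>
    rw [add_zero, range_add_one, erase_insert notMem_range_self, prod_range_natCast_sub,
      ← Nat.descFactorial_eq_prod_range, Nat.descFactorial_self]
    simp
  | succ m ih =>
    have hne : k + m + 1 ≠ k := by omega
    rw [← add_assoc, range_add_one, erase_insert_of_ne hne, prod_insert (by simp), ih,
      Nat.factorial_succ]
    push_cast
    ring

theorem neg_one_pow_mul_factorial_mul_nodalWeight {K : Type*} [Field K] [CharZero K] {n k : ℕ}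
    (hk : k ≤ n) :
    (-1) ^ n * n ! * nodalWeight (range (n + 1)) (Nat.cast : ℕ → K) k = n.choose k * (-1) ^ k := by
  obtain ⟨m, rfl⟩ := Nat.exists_eq_add_of_le hk
  rw [nodalWeight, prod_inv_distrib, prod_erase_range_natCast_sub,
    ← Nat.add_choose_mul_factorial_mul_factorial, Nat.choose_symm_add]
  have hkf : (k ! : K) ≠ 0 := by exact_mod_cast k.factorial_ne_zero
  have hmf : (m ! : K) ≠ 0 := by exact_mod_cast m.factorial_ne_zero
  push_cast
  field_simp
  ring

theorem closedBall_subset_re_gt {c : ℂ} {r a : ℝ} (h : a < c.re - r) :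
    closedBall c r ⊆ {s : ℂ | a < s.re} := by
  intro s hs
  have hre := (abs_le.1 ((abs_re_le_norm (s - c)).trans (mem_closedBall_iff_norm.1 hs))).1
  rw [sub_re] at hre
  show a < s.re
  linarith

theorem dist_natCast_midpoint (n₀ n j : ℕ) :
    dist (j : ℂ) (((n₀ : ℂ) + n) / 2) = |(j : ℝ) - (n₀ + n) / 2| := by
  rw [dist_eq, show (j : ℂ) - ((n₀ : ℂ) + n) / 2 = (((j : ℝ) - (n₀ + n) / 2 : ℝ) : ℂ) by
    push_cast; ring, norm_real, Real.norm_eq_abs]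

section Midpoint

variable {n₀ n j : ℕ} {r : ℝ}

theorem closedBall_midpoint_subset (hr : r < ((n : ℝ) - n₀) / 2 + 1 / 2) :
    closedBall (((n₀ : ℂ) + n) / 2) r ⊆ {s : ℂ | (n₀ : ℝ) - 1 / 2 < s.re} :=
  closedBall_subset_re_gt <| by
    rw [show ((n₀ : ℂ) + n) / 2 = (((n₀ + n) / 2 : ℝ) : ℂ) by push_cast; ring, ofReal_re]
    linarith

theorem natCast_mem_ball_midpoint (hr : ((n : ℝ) - n₀) / 2 < r) (h₀ : n₀ ≤ j) (h₁ : j ≤ n) :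
    (j : ℂ) ∈ ball (((n₀ : ℂ) + n) / 2) r := by
  have : (n₀ : ℝ) ≤ j ∧ (j : ℝ) ≤ n := ⟨Nat.cast_le.2 h₀, Nat.cast_le.2 h₁⟩
  rw [mem_ball, dist_natCast_midpoint, abs_lt]
  constructor <;> linarith

theorem natCast_notMem_closedBall_midpoint (hr : r < ((n : ℝ) - n₀) / 2 + 1 / 2) (hj : j < n₀) :
    (j : ℂ) ∉ closedBall (((n₀ : ℂ) + n) / 2) r := fun hmem => by
  have hj : (j : ℝ) + 1 ≤ n₀ := by exact_mod_cast hj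
  have hre := closedBall_midpoint_subset hr hmem
  simp only [Set.mem_ofPred_eq, natCast_re] at hre
  linarith

theorem natCast_notMem_sphere_midpoint (hr₁ : ((n : ℝ) - n₀) / 2 < r)
    (hr₂ : r < ((n : ℝ) - n₀) / 2 + 1 / 2) (hj : j ≤ n) :
    (j : ℂ) ∉ sphere (((n₀ : ℂ) + n) / 2) r := fun hmem => by
  by_cases h₀ : n₀ ≤ j
  · exact sphere_disjoint_ball.ne_of_mem hmem (natCast_mem_ball_midpoint hr₁ h₀ hj) rfl
  · exact natCast_notMem_closedBall_midpoint hr₂ (by omega) (sphere_subset_closedBall hmem)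

open scoped Classical in
theorem filter_natCast_mem_ball_midpoint (hr₁ : ((n : ℝ) - n₀) / 2 < r)
    (hr₂ : r < ((n : ℝ) - n₀) / 2 + 1 / 2) :
    {j ∈ range (n + 1) | ((j : ℕ) : ℂ) ∈ ball (((n₀ : ℂ) + n) / 2) r} = Icc n₀ n := by
  ext j
  simp only [mem_filter, mem_range, mem_Icc, Nat.lt_succ_iff]
  refine ⟨fun ⟨hj, hmem⟩ => ⟨?_, hj⟩, fun ⟨h₀, h₁⟩ => ⟨h₁, natCast_mem_ball_midpoint hr₁ h₀ h₁⟩⟩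
  by_contra h₀
  exact natCast_notMem_closedBall_midpoint hr₂ (by omega) (ball_subset_closedBall hmem)

end Midpoint

/-- **Nörlund–Rice integral representation.** If `f` is holomorphic on the half-plane
`Re s > n₀ - 1/2`, then the finite differences `∑_{k=n₀}^n C(n,k) (-1)^k f(k)` are given by
the contour integral `((-1)^n n!/(2πi)) ∮ f(s)/(s(s-1)⋯(s-n)) ds` over a circle centered at
`c = (n₀+n)/2` of radius `r` with `(n-n₀)/2 < r < (n-n₀)/2 + 1/2`, which encircles exactly
the integers `n₀, …, n` and stays in the half-plane. -/
theorem norlund_rice_integral (n₀ n : ℕ) (hn : n₀ ≤ n) (f : ℂ → ℂ)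
    (hf : DifferentiableOn ℂ f {s : ℂ | (n₀ : ℝ) - 1 / 2 < s.re})
    (c : ℂ) (hc : c = ((n₀ : ℂ) + (n : ℂ)) / 2)
    (r : ℝ) (hr₁ : ((n : ℝ) - (n₀ : ℝ)) / 2 < r) (hr₂ : r < ((n : ℝ) - (n₀ : ℝ)) / 2 + 1 / 2) :
    ∑ k ∈ Finset.Icc n₀ n, (n.choose k : ℂ) * (-1) ^ k * f k =
      (-1) ^ n * (n.factorial : ℂ) / (2 * Real.pi * Complex.I) *
        ∮ s in C(c, r), f s / ∏ j ∈ Finset.range (n + 1), (s - (j : ℂ)) := by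
  subst hc
  have hr : 0 ≤ r := by linarith [(Nat.cast_le (α := ℝ)).2 hn]
  have key := circleIntegral_inv_prod_sub_smul Nat.cast_injective.injOn nonempty_range_add_one hr
    (hf.mono (closedBall_midpoint_subset hr₂))
    fun j hj => natCast_notMem_sphere_midpoint hr₁ hr₂ (Nat.lt_succ_iff.1 (mem_range.1 hj))
  simp only [smul_eq_mul, filter_natCast_mem_ball_midpoint hr₁ hr₂] at key
  simp_rw [div_eq_inv_mul (f _)]
  rw [key, ← mul_assoc, div_mul_cancel₀ _ two_pi_I_ne_zero, mul_sum]
  refine sum_congr rfl fun k hk => ?_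
  rw [← mul_assoc, neg_one_pow_mul_factorial_mul_nodalWeight (mem_Icc.1 hk).2]
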